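/- Let T be a nonempty finite index set, for each α ∈ T let E_α be a finite-dimensional real normed vector space and P_α ⊆ E_α a linear subspace of dimension d_α, and set C = ∑_{α∈T} d_α. Let X be a real normed vector space and let 𝓡 : (∏_{α∈T} E_α) → X be a multilinear map satisfying ‖𝓡((v_α)_{α∈T})‖ ≤ L · ∏_{α∈T} ‖v_α‖ for all inputs, with L > 0. For ρ ≥ 1 define M_ρ = { a · 𝓡((v_α)_{α∈T}) : a ∈ ℝ, |a| ≤ ρ, v_α ∈ P_α and ‖v_α‖ ≤ 1 for all α ∈ T }. Then for every ε with 0 < ε ≤ ρ L |T|, the set M_ρ admits an ε-net in X of cardinality at most (3 ε^{-1} ρ L |T|)^C; equivalently its metric entropy satisfies H(ε, M_ρ) ≤ C · log(3 ε^{-1} ρ L |T|). -/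

import Mathlib

open Metric MeasureTheory Module
open scoped ENNReal

lemma card_le_of_sep {F : Type*} [NormedAddCommGroup F] [NormedSpace ℝ F]
    [FiniteDimensional ℝ F] [Nontrivial F] {r δ : ℝ} (hr : 0 < r) (hδ : 0 < δ)
    (s : Finset F) (hs : ↑s ⊆ Metric.closedBall (0:F) r)
    (hsep : (↑s : Set F).Pairwise fun x y => δ ≤ dist x y) :
    (s.card : ℝ) * (δ/2) ^ (Module.finrank ℝ F) ≤ (r + δ/2) ^ (Module.finrank ℝ F) := by
  borelize F
  set n := Module.finrank ℝ F with hn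
  set μ := (Module.finBasis ℝ F).addHaar with hμ
  have hdisj : (↑s : Set F).PairwiseDisjoint (fun x => Metric.ball x (δ/2)) := by
    intro x hx y hy hxy
    exact Metric.ball_disjoint_ball (by linarith [hsep hx hy hxy])
  have hsub : (⋃ x ∈ s, Metric.ball x (δ/2)) ⊆ Metric.closedBall (0:F) (r + δ/2) := by
    intro z hz
    simp only [Set.mem_iUnion, Metric.mem_ball] at hz
    obtain ⟨x, hx, hzx⟩ := hz
    have hx0 : dist x 0 ≤ r := hs hx
    have := dist_triangle z x 0
    simp only [Metric.mem_closedBall]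
    linarith
  have key : μ (⋃ x ∈ s, Metric.ball x (δ/2)) = ∑ x ∈ s, μ (Metric.ball x (δ/2)) :=
    measure_biUnion_finset hdisj (fun x _ => measurableSet_ball)
  have hball : ∀ x : F, μ (Metric.ball x (δ/2)) =
      ENNReal.ofReal ((δ/2) ^ n) * μ (Metric.ball 0 1) := fun x =>
    Measure.addHaar_ball μ x (by linarith)
  have hcb : μ (Metric.closedBall (0:F) (r + δ/2)) =
      ENNReal.ofReal ((r + δ/2) ^ n) * μ (Metric.ball 0 1) :=
    Measure.addHaar_closedBall μ 0 (by linarith)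
  have hle : (s.card : ℝ≥0∞) * (ENNReal.ofReal ((δ/2) ^ n) * μ (Metric.ball 0 1))
      ≤ ENNReal.ofReal ((r + δ/2) ^ n) * μ (Metric.ball 0 1) := by
    calc (s.card : ℝ≥0∞) * (ENNReal.ofReal ((δ/2) ^ n) * μ (Metric.ball 0 1))
        = ∑ x ∈ s, μ (Metric.ball x (δ/2)) := by
          simp only [hball]; rw [Finset.sum_const, nsmul_eq_mul]
      _ = μ (⋃ x ∈ s, Metric.ball x (δ/2)) := key.symm
      _ ≤ μ (Metric.closedBall (0:F) (r + δ/2)) := measure_mono hsub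
      _ = _ := hcb
  rw [← mul_assoc] at hle
  have hpos : μ (Metric.ball (0:F) 1) ≠ 0 := (measure_ball_pos μ 0 one_pos).ne'
  have hfin : μ (Metric.ball (0:F) 1) ≠ ⊤ := measure_ball_lt_top.ne
  rw [ENNReal.mul_le_mul_iff_left hpos hfin] at hle
  have h1 : ((s.card : ℝ≥0∞)) * ENNReal.ofReal ((δ/2) ^ n)
      = ENNReal.ofReal ((s.card : ℝ) * (δ/2) ^ n) := by
    rw [ENNReal.ofReal_mul (by positivity), ENNReal.ofReal_natCast]
  rw [h1] at hle
  exact (ENNReal.ofReal_le_ofReal_iff (by positivity)).mp hle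

lemma exists_net (F : Type*) [NormedAddCommGroup F] [NormedSpace ℝ F]
    [FiniteDimensional ℝ F] {r δ : ℝ} (hr : 0 < r) (hδ : 0 < δ) (hδr : δ ≤ r) :
    ∃ S : Finset F, (S.card : ℝ) ≤ (3 * r / δ) ^ (Module.finrank ℝ F) ∧
      ↑S ⊆ Metric.closedBall (0:F) r ∧
      ∀ x ∈ Metric.closedBall (0:F) r, ∃ y ∈ S, dist x y ≤ δ := by
  have hbase : (1:ℝ) ≤ 3 * r / δ := by
    rw [le_div_iff₀ hδ]; nlinarith
  rcases subsingleton_or_nontrivial F with hFs | hFn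
  · refine ⟨{0}, ?_, ?_, ?_⟩
    · simpa using one_le_pow₀ hbase (n := Module.finrank ℝ F)
    · intro x hx; simp only [Finset.coe_singleton, Set.mem_singleton_iff] at hx
      simp [hx, Metric.mem_closedBall, hr.le]
    · intro x _; exact ⟨0, Finset.mem_singleton_self 0, by
        rw [Subsingleton.elim x 0]; simpa using hδ.le⟩
  · classical
    set n := Module.finrank ℝ F with hn
    have hcount : ∀ s : Finset F, ↑s ⊆ Metric.closedBall (0:F) r →
        (↑s : Set F).Pairwise (fun x y => δ ≤ dist x y) →
        (s.card : ℝ) ≤ (3 * r / δ) ^ n := by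
      intro s hs hsep
      have h1 := card_le_of_sep hr hδ s hs hsep
      have h2 : (0:ℝ) < (δ/2) ^ n := by positivity
      have h3 : (s.card : ℝ) ≤ ((r + δ/2) / (δ/2)) ^ n := by
        rw [div_pow, le_div_iff₀ h2]; exact h1
      refine h3.trans (pow_le_pow_left₀ (by positivity) ?_ n)
      rw [div_le_div_iff₀ (by positivity) hδ]; nlinarith
    set A : Set ℕ := {k : ℕ | ∃ s : Finset F, ↑s ⊆ Metric.closedBall (0:F) r ∧
        (↑s : Set F).Pairwise (fun x y => δ ≤ dist x y) ∧ s.card = k} with hA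
    have hA0 : (0:ℕ) ∈ A := ⟨∅, by simp, by simp, rfl⟩
    have hAbdd : BddAbove A := by
      refine ⟨⌊(3 * r / δ) ^ n⌋₊, fun k hk => ?_⟩
      obtain ⟨s, hs, hsep, rfl⟩ := hk
      exact Nat.le_floor (hcount s hs hsep)
    obtain ⟨s, hs, hsep, hcard⟩ := Nat.sSup_mem ⟨0, hA0⟩ hAbdd
    refine ⟨s, hcount s hs hsep, hs, ?_⟩
    intro x hx
    by_contra hcon
    push_neg at hcon
    have hxs : x ∉ s := fun hxs => absurd (hcon x hxs) (by simp [hδ.le])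
    have hins : (sSup A + 1) ∈ A := by
      refine ⟨insert x s, ?_, ?_, by rw [Finset.card_insert_of_notMem hxs, hcard]⟩
      · rw [Finset.coe_insert]
        exact Set.insert_subset hx hs
      · rw [Finset.coe_insert]
        haveI : Std.Symm (fun x y : F => δ ≤ dist x y) := ⟨fun a b hab => by rwa [dist_comm]⟩
        rw [Set.pairwise_insert_of_symm]
        exact ⟨hsep, fun b hb _ => (hcon b hb).le⟩
    have := le_csSup hAbdd hins
    omega


/-- **Proposition 3.3** (metric entropy of tree tensor networks with bounded
parameters), stated for a general multilinear parametrization.  Let `T` be a nonempty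
finite index set, `E α` finite-dimensional real normed spaces, `P α ⊆ E α` subspaces
with `dim (P α) = d α`, `C = ∑ α, d α`, and let `𝓡` be a multilinear map into a real
normed space `X` satisfying `‖𝓡 v‖ ≤ L * ∏ α, ‖v α‖` with `L > 0`.  For `ρ ≥ 1`, the
set `M_ρ = { a • 𝓡 v : |a| ≤ ρ, v α ∈ P α, ‖v α‖ ≤ 1 }` admits, for every
`0 < ε ≤ ρ L |T|`, an `ε`-net of cardinality at most `(3 ε⁻¹ ρ L |T|)^C`. -/
theorem metric_entropy_tree_tensor_networks
    {T : Type*} [Fintype T] [Nonempty T]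
    {E : T → Type*} [∀ α, NormedAddCommGroup (E α)] [∀ α, NormedSpace ℝ (E α)]
    [∀ α, FiniteDimensional ℝ (E α)]
    (P : ∀ α, Submodule ℝ (E α)) (d : T → ℕ)
    (hd : ∀ α, Module.finrank ℝ (P α) = d α)
    {X : Type*} [NormedAddCommGroup X] [NormedSpace ℝ X]
    (𝓡 : MultilinearMap ℝ E X) (L : ℝ) (hL : 0 < L)
    (hbound : ∀ v : (∀ α, E α), ‖𝓡 v‖ ≤ L * ∏ α, ‖v α‖)
    (ρ : ℝ) (hρ : 1 ≤ ρ)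
    (ε : ℝ) (hε : 0 < ε) (hε' : ε ≤ ρ * L * Fintype.card T) :
    ∃ S : Finset X,
      (S.card : ℝ) ≤ (3 * ε⁻¹ * ρ * L * Fintype.card T) ^ (∑ α, d α) ∧
      ∀ f ∈ {f : X | ∃ (a : ℝ) (v : ∀ α, E α), |a| ≤ ρ ∧ (∀ α, v α ∈ P α) ∧
          (∀ α, ‖v α‖ ≤ 1) ∧ f = a • 𝓡 v},
        ∃ g ∈ S, dist f g ≤ ε := by
  classical
  set n := Fintype.card T with hncard
  have hn : 0 < n := Fintype.card_pos
  have hρ0 : (0:ℝ) < ρ := lt_of_lt_of_le one_pos hρ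
  set δ : ℝ := ε / (ρ * L * n) with hδdef
  have hden : (0:ℝ) < ρ * L * n := by positivity
  have hδpos : 0 < δ := div_pos hε hden
  have hδ1 : δ ≤ 1 := by rw [hδdef, div_le_one hden]; exact hε'
  have hbase : 3 / δ = 3 * ε⁻¹ * ρ * L * n := by
    rw [hδdef]; field_simp
  obtain ⟨α0⟩ : Nonempty T := inferInstance
  set r : T → ℝ := fun α => if α = α0 then ρ else 1 with hrdef
  have hrpos : ∀ α, 0 < r α := fun α => by
    simp only [hrdef]; split <;> [exact hρ0; exact one_pos]
  -- nets in each P α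
  have hnets : ∀ α, ∃ Sα : Finset (P α),
      ((Sα.card : ℝ) ≤ (3 / δ) ^ (d α)) ∧
      (∀ y ∈ Sα, ‖(y : E α)‖ ≤ r α) ∧
      (∀ x : P α, ‖(x : E α)‖ ≤ r α → ∃ y ∈ Sα, ‖(x : E α) - y‖ ≤ r α * δ) := by
    intro α
    have hδr : r α * δ ≤ r α := by
      nlinarith [hrpos α, hδpos]
    obtain ⟨Sα, hcard, hsub, hnet⟩ := exists_net (↥(P α)) (hrpos α)
      (by positivity : 0 < r α * δ) hδr
    refine ⟨Sα, ?_, ?_, ?_⟩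
    · have : (3 * r α / (r α * δ)) = 3 / δ := by
        rw [mul_comm 3 (r α)] at *
        rw [mul_div_mul_left _ _ (hrpos α).ne']
      rwa [this, hd α] at hcard
    · intro y hy
      have := hsub hy
      rwa [Metric.mem_closedBall, dist_zero_right] at this
    · intro x hx
      have hxmem : x ∈ Metric.closedBall (0 : P α) (r α) := by
        rw [Metric.mem_closedBall, dist_zero_right]
        exact hx
      obtain ⟨y, hy, hdist⟩ := hnet x hxmem
      refine ⟨y, hy, ?_⟩
      rw [dist_eq_norm] at hdist
      exact hdist
  choose Snet hcardnet hsubnet hcovnet using hnets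
  set S' : ∀ α, Finset (E α) := fun α => (Snet α).image ((↑) : P α → E α) with hS'def
  refine ⟨(Fintype.piFinset S').image (fun v => 𝓡 v), ?_, ?_⟩
  · calc ((Fintype.piFinset S').image (fun v => 𝓡 v)).card
        ≤ ((Fintype.piFinset S').card : ℝ) := by
          exact_mod_cast Finset.card_image_le
      _ = ∏ α, ((S' α).card : ℝ) := by
          rw [Fintype.card_piFinset]; push_cast; rfl
      _ ≤ ∏ α, (3 / δ) ^ (d α) := by
          refine Finset.prod_le_prod (fun α _ => by positivity) (fun α _ => ?_)
          refine le_trans ?_ (hcardnet α)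
          exact_mod_cast Finset.card_image_le
      _ = (3 / δ) ^ (∑ α, d α) := by
          rw [Finset.prod_pow_eq_pow_sum]
      _ = (3 * ε⁻¹ * ρ * L * n) ^ (∑ α, d α) := by rw [hbase]
  · rintro f ⟨a, v, ha, hvP, hv1, rfl⟩
    set m₁ : ∀ α, E α := Function.update v α0 (a • v α0) with hm₁
    have hfm : a • 𝓡 v = 𝓡 m₁ := by
      rw [hm₁, 𝓡.map_update_smul v α0 a (v α0), Function.update_eq_self]
    have hm₁P : ∀ α, m₁ α ∈ P α := by
      intro α
      by_cases h : α = α0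
      · subst h; rw [hm₁, Function.update_self]
        exact Submodule.smul_mem _ _ (hvP α)
      · rw [hm₁, Function.update_of_ne h]; exact hvP α
    have hm₁norm : ∀ α, ‖m₁ α‖ ≤ r α := by
      intro α
      by_cases h : α = α0
      · subst h; rw [hm₁, Function.update_self, norm_smul, hrdef]
        simp only [if_pos rfl]
        calc ‖a‖ * ‖v α‖ ≤ ρ * 1 :=
            mul_le_mul (by rwa [Real.norm_eq_abs]) (hv1 α) (norm_nonneg _)
              (le_trans (abs_nonneg a) ha)
          _ = ρ := mul_one ρ
      · rw [hm₁, Function.update_of_ne h, hrdef]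
        simp only [if_neg h]
        exact hv1 α
    -- choose net points
    have hpick : ∀ α, ∃ y ∈ Snet α, ‖m₁ α - (y : E α)‖ ≤ r α * δ := by
      intro α
      exact hcovnet α ⟨m₁ α, hm₁P α⟩ (hm₁norm α)
    choose y hy hydist using hpick
    set w : ∀ α, E α := fun α => (y α : E α) with hwdef
    have hwmem : w ∈ Fintype.piFinset S' := by
      rw [Fintype.mem_piFinset]
      intro α
      exact Finset.mem_image_of_mem _ (hy α)
    refine ⟨𝓡 w, Finset.mem_image_of_mem _ hwmem, ?_⟩
    rw [dist_eq_norm, hfm]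
    have key := 𝓡.norm_image_sub_le_of_bound' hL.le hbound m₁ w
    have hsummand : ∀ i : T,
        (∏ j, if j = i then ‖m₁ i - w i‖ else max ‖m₁ j‖ ‖w j‖) ≤ δ * ρ := by
      intro i
      have hstep : ∀ j : T, (if j = i then ‖m₁ i - w i‖ else max ‖m₁ j‖ ‖w j‖)
          ≤ (if j = i then δ else 1) * (if j = α0 then ρ else 1) := by
        intro j
        by_cases hji : j = i
        · subst hji
          by_cases hj0 : j = α0
          · simp only [if_pos rfl, if_pos hj0]
            have h := hydist j
            have hrj : r j = ρ := by simp [hrdef, hj0]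
            rw [hrj] at h
            calc ‖m₁ j - w j‖ ≤ ρ * δ := h
              _ = δ * ρ := mul_comm _ _
          · simp only [if_pos rfl, if_neg hj0, mul_one]
            have h := hydist j
            have hrj : r j = 1 := by simp [hrdef, hj0]
            rw [hrj, one_mul] at h
            exact h
        · simp only [if_neg hji, one_mul]
          have h3 : max ‖m₁ j‖ ‖w j‖ ≤ r j := max_le (hm₁norm j) (hsubnet j (y j) (hy j))
          by_cases hj0 : j = α0
          · simp only [if_pos hj0]
            have hrj : r j = ρ := by simp [hrdef, hj0]
            rwa [hrj] at h3
          · simp only [if_neg hj0]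
            have hrj : r j = 1 := by simp [hrdef, hj0]
            rwa [hrj] at h3
      calc (∏ j, if j = i then ‖m₁ i - w i‖ else max ‖m₁ j‖ ‖w j‖)
          ≤ ∏ j, (if j = i then δ else 1) * (if j = α0 then ρ else 1) := by
            refine Finset.prod_le_prod (fun j _ => ?_) (fun j _ => hstep j)
            split <;> [exact norm_nonneg _; exact le_max_of_le_left (norm_nonneg _)]
        _ = (∏ j, if j = i then δ else 1) * (∏ j, if j = α0 then ρ else 1) :=
            Finset.prod_mul_distrib
        _ = δ * ρ := by
            rw [Finset.prod_ite_eq' Finset.univ i (fun _ => δ),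
              Finset.prod_ite_eq' Finset.univ α0 (fun _ => ρ)]
            simp
    calc ‖𝓡 m₁ - 𝓡 w‖
        ≤ L * ∑ i, ∏ j, if j = i then ‖m₁ i - w i‖ else max ‖m₁ j‖ ‖w j‖ := key
      _ ≤ L * ∑ _i : T, δ * ρ := by
          refine mul_le_mul_of_nonneg_left (Finset.sum_le_sum fun i _ => hsummand i) hL.le
      _ = L * (n * (δ * ρ)) := by
          rw [Finset.sum_const, nsmul_eq_mul, hncard]; rfl
      _ = ε := by
          rw [hδdef]; field_simp
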